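/- arXiv:2405.04150 — 3 statements merged into one kernel-verified Lean document; each statement's English description precedes it below -/
import Mathlib

section
/- Let f : ℝ^d → ℝ be locally Lipschitz and subdifferentially polynomially bounded (SPB) with parameters R₁, R₂, m. Then for all x, y ∈ ℝ^d one has |f(x) − f(y)| ≤ (2^{m−1} R₁ ‖x‖^m + 2^{m−1} R₁ ‖y − x‖^m + R₂) ‖x − y‖. -/
open MeasureTheory Filter Set
open scoped InnerProductSpace ENNReal Topology Real NNReal

/-- The Clarke directional derivative
`f°(x; v) = limsup_{x' → x, t ↓ 0} (f (x' + t v) - f x') / t`. -/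
noncomputable def clarkeDeriv {d : ℕ} (f : EuclideanSpace ℝ (Fin d) → ℝ)
    (x v : EuclideanSpace ℝ (Fin d)) : ℝ :=
  Filter.limsup (fun p : EuclideanSpace ℝ (Fin d) × ℝ => (f (p.1 + p.2 • v) - f p.1) / p.2)
    ((𝓝 x) ×ˢ (𝓝[>] (0 : ℝ)))

/-- The Clarke subdifferential `∂_C f(x) = {s : ⟪s, v⟫ ≤ f°(x; v) ∀ v}`. -/
def clarkeSubdiff {d : ℕ} (f : EuclideanSpace ℝ (Fin d) → ℝ) (x : EuclideanSpace ℝ (Fin d)) :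
    Set (EuclideanSpace ℝ (Fin d)) :=
  {s | ∀ v, ⟪s, v⟫_ℝ ≤ clarkeDeriv f x v}

/-- The Goldstein δ-subdifferential `∂_G^δ f(x) = conv (⋃_{y ∈ B̄(x, δ)} ∂_C f(y))`. -/
def goldsteinSubdiff {d : ℕ} (f : EuclideanSpace ℝ (Fin d) → ℝ) (δ : ℝ)
    (x : EuclideanSpace ℝ (Fin d)) : Set (EuclideanSpace ℝ (Fin d)) :=
  convexHull ℝ (⋃ y ∈ Metric.closedBall x δ, clarkeSubdiff f y)

/-- `f` is subdifferentially polynomially bounded with parameters `R1, R2, m`. -/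
def IsSPB {d : ℕ} (f : EuclideanSpace ℝ (Fin d) → ℝ) (R1 R2 : ℝ) (m : ℕ) : Prop :=
  LocallyLipschitz f ∧ 0 ≤ R1 ∧ 0 < R2 ∧ (R1 = 0 ↔ m = 0) ∧
    ∀ x : EuclideanSpace ℝ (Fin d), ∀ ζ ∈ clarkeSubdiff f x, ‖ζ‖ ≤ R1 * ‖x‖ ^ m + R2

/-!
The Clarke derivative `v ↦ f°(x; v)` of a locally Lipschitz function is sublinear, so by
Hahn–Banach and Riesz it is the support function of `∂_C f(x)`; hence the SPB bound gives
`f°(z; v) ≤ (R₁‖z‖^m + R₂)‖v‖`. Since `f°` dominates the right Dini derivative of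
`t ↦ f (x + t • v)`, the mean value inequality for Dini derivatives bounds `|f x - f y|` by the
largest such constant on the segment `[x, y]`, where `‖z‖ ≤ ‖x‖ + ‖y - x‖`, and
`(a + b)^m ≤ 2^(m-1) (a^m + b^m)` splits the power.
-/

lemma add_pow_le_two_zpow_mul {α : Type*} [Field α] [LinearOrder α] [IsStrictOrderedRing α]
    {a b : α} (ha : 0 ≤ a) (hb : 0 ≤ b) (m : ℕ) :
    (a + b) ^ m ≤ 2 ^ ((m : ℤ) - 1) * (a ^ m + b ^ m) := by
  cases m with
  | zero => norm_num
  | succ k => simpa [zpow_natCast] using add_pow_le ha hb (k + 1)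

lemma norm_le_norm_add_norm_sub_of_mem_segment {F : Type*} [SeminormedAddCommGroup F]
    [NormedSpace ℝ F] {x y z : F} (hz : z ∈ segment ℝ x y) : ‖z‖ ≤ ‖x‖ + ‖y - x‖ :=
  ((convexOn_norm convex_univ).le_on_segment (mem_univ x) (mem_univ y) hz).trans <|
    max_le (le_add_of_nonneg_right (norm_nonneg _)) (norm_le_insert' y x)

lemma tendsto_fst_add_snd_smul {F : Type*} [NormedAddCommGroup F] [NormedSpace ℝ F] (x v : F) :
    Tendsto (fun p : F × ℝ => p.1 + p.2 • v) (𝓝 x ×ˢ 𝓝[>] 0) (𝓝 x) := by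
  have h : Tendsto (fun p : F × ℝ => p.1 + p.2 • v) (𝓝 (x, 0)) (𝓝 (x + (0 : ℝ) • v)) :=
    (continuous_fst.add (continuous_snd.smul continuous_const)).tendsto _
  rw [zero_smul, add_zero, nhds_prod_eq] at h
  exact h.mono_left (prod_mono le_rfl nhdsWithin_le_nhds)

theorem exists_linearMap_le_sublinear_apply_eq {F : Type*} [AddCommGroup F] [Module ℝ F]
    (N : F → ℝ) (N_hom : ∀ c : ℝ, 0 < c → ∀ x, N (c • x) = c * N x)
    (N_add : ∀ x y, N (x + y) ≤ N x + N y) (v : F) :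
    ∃ g : F →ₗ[ℝ] ℝ, (∀ x, g x ≤ N x) ∧ g v = N v := by
  have N_zero : N 0 = 0 := by
    have h := N_hom 2 two_pos 0
    rw [smul_zero] at h
    linarith
  have le_smul : ∀ c : ℝ, c * N v ≤ N (c • v) := by
    intro c
    rcases lt_trichotomy c 0 with hc | rfl | hc
    · have hneg := N_add v (-v)
      rw [add_neg_cancel, N_zero] at hneg
      rw [← neg_smul_neg, N_hom (-c) (neg_pos.2 hc)]
      nlinarith
    · simp [N_zero]
    · rw [N_hom c hc]
  let g₀ : F →ₗ.[ℝ] ℝ := LinearPMap.mkSpanSingleton' v (N v) fun c hcv => by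
    rcases smul_eq_zero.1 hcv with h | h <;> simp [h, N_zero]
  obtain ⟨g, hg_ext, hg_le⟩ := exists_extension_of_le_sublinear g₀ N N_hom N_add <| by
    rintro ⟨y, hy⟩
    obtain ⟨c, rfl⟩ := Submodule.mem_span_singleton.1 hy
    rw [LinearPMap.mkSpanSingleton'_apply]
    exact le_smul c
  refine ⟨g, hg_le, ?_⟩
  exact (hg_ext ⟨v, Submodule.mem_span_singleton_self v⟩).trans
    (LinearPMap.mkSpanSingleton'_apply_self _ _ _ _)

section Clarke

variable {d : ℕ} {f : EuclideanSpace ℝ (Fin d) → ℝ}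

local notation "E" => EuclideanSpace ℝ (Fin d)

noncomputable def clarkeQuotient (f : E → ℝ) (v : E) (p : E × ℝ) : ℝ :=
  (f (p.1 + p.2 • v) - f p.1) / p.2

lemma clarkeDeriv_eq_limsup (x v : E) :
    clarkeDeriv f x v = limsup (clarkeQuotient f v) (𝓝 x ×ˢ 𝓝[>] 0) :=
  rfl

lemma LocallyLipschitz.isBoundedUnder_abs_clarkeQuotient (hf : LocallyLipschitz f) (x v : E) :
    IsBoundedUnder (· ≤ ·) (𝓝 x ×ˢ 𝓝[>] 0) fun p => |clarkeQuotient f v p| := by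
  obtain ⟨K, t, ht, hK⟩ := hf x
  refine ⟨K * ‖v‖, eventually_map.2 ?_⟩
  filter_upwards [tendsto_fst.eventually ht, (tendsto_fst_add_snd_smul x v).eventually ht,
    tendsto_snd.eventually self_mem_nhdsWithin] with p hp hpv (hp₂ : 0 < p.2)
  have hlip := hK.dist_le_mul _ hpv _ hp
  rw [Real.dist_eq, dist_eq_norm, add_sub_cancel_left, norm_smul, Real.norm_of_nonneg hp₂.le]
    at hlip
  rw [clarkeQuotient, abs_div, abs_of_pos hp₂, div_le_iff₀ hp₂]
  linarith

lemma LocallyLipschitz.isBoundedUnder_clarkeQuotient_comp (hf : LocallyLipschitz f) {x : E}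
    (v : E) {φ : E × ℝ → E × ℝ} (hφ : Tendsto φ (𝓝 x ×ˢ 𝓝[>] 0) (𝓝 x ×ˢ 𝓝[>] 0)) :
    IsBoundedUnder (· ≤ ·) (𝓝 x ×ˢ 𝓝[>] 0) (clarkeQuotient f v ∘ φ) ∧
      IsBoundedUnder (· ≥ ·) (𝓝 x ×ˢ 𝓝[>] 0) (clarkeQuotient f v ∘ φ) :=
  isBoundedUnder_le_abs.1 (hφ.isBoundedUnder_comp (hf.isBoundedUnder_abs_clarkeQuotient x v))

lemma LocallyLipschitz.limsup_clarkeQuotient_comp_le (hf : LocallyLipschitz f) {x : E} (v : E)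
    {φ : E × ℝ → E × ℝ} (hφ : Tendsto φ (𝓝 x ×ˢ 𝓝[>] 0) (𝓝 x ×ˢ 𝓝[>] 0)) :
    limsup (clarkeQuotient f v ∘ φ) (𝓝 x ×ˢ 𝓝[>] 0) ≤ clarkeDeriv f x v := by
  refine hφ.limsup_comp_le_limsup ?_ (isBoundedUnder_le_abs.1
    (hf.isBoundedUnder_abs_clarkeQuotient x v)).1
  rw [IsCoboundedUnder, map_map]
  exact (hf.isBoundedUnder_clarkeQuotient_comp v hφ).2.isCoboundedUnder_le

lemma clarkeDeriv_add_le (hf : LocallyLipschitz f) (x v w : E) :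
    clarkeDeriv f x (v + w) ≤ clarkeDeriv f x v + clarkeDeriv f x w := by
  set φ : E × ℝ → E × ℝ := fun p => (p.1 + p.2 • w, p.2)
  have hφ : Tendsto φ (𝓝 x ×ˢ 𝓝[>] 0) (𝓝 x ×ˢ 𝓝[>] 0) :=
    (tendsto_fst_add_snd_smul x w).prodMk tendsto_snd
  -- the increment along `v + w` from `p.1` splits at the intermediate point `p.1 + p.2 • w`
  have hsplit : clarkeQuotient f (v + w) = clarkeQuotient f v ∘ φ + clarkeQuotient f w := by
    funext p
    simp only [clarkeQuotient, φ, Pi.add_apply, Function.comp_apply]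
    rw [← add_div, sub_add_sub_cancel, smul_add, add_comm (p.2 • v), add_assoc]
  obtain ⟨hv_le, hv_ge⟩ := hf.isBoundedUnder_clarkeQuotient_comp v hφ
  obtain ⟨hw_le, hw_ge⟩ := isBoundedUnder_le_abs.1 (hf.isBoundedUnder_abs_clarkeQuotient x w)
  rw [clarkeDeriv_eq_limsup, hsplit]
  calc limsup (clarkeQuotient f v ∘ φ + clarkeQuotient f w) (𝓝 x ×ˢ 𝓝[>] 0)
      ≤ limsup (clarkeQuotient f v ∘ φ) (𝓝 x ×ˢ 𝓝[>] 0) + clarkeDeriv f x w :=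
        limsup_add_le hv_ge hv_le hw_ge.isCoboundedUnder_le hw_le
    _ ≤ clarkeDeriv f x v + clarkeDeriv f x w := by
        gcongr
        exact hf.limsup_clarkeQuotient_comp_le v hφ

lemma clarkeDeriv_smul_le (hf : LocallyLipschitz f) (x v : E) {c : ℝ} (hc : 0 < c) :
    clarkeDeriv f x (c • v) ≤ c * clarkeDeriv f x v := by
  set ψ : E × ℝ → E × ℝ := fun p => (p.1, c * p.2)
  have hψ : Tendsto ψ (𝓝 x ×ˢ 𝓝[>] 0) (𝓝 x ×ˢ 𝓝[>] 0) := by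
    refine tendsto_fst.prodMk (tendsto_nhdsWithin_iff.2 ⟨?_, ?_⟩)
    · simpa using ((tendsto_snd (f := 𝓝 x) (g := 𝓝[>] (0 : ℝ))).mono_right
        nhdsWithin_le_nhds).const_mul c
    · exact tendsto_snd.eventually (eventually_nhdsWithin_of_forall fun t ht => mul_pos hc ht)
  have hscale : clarkeQuotient f (c • v) = (c * ·) ∘ (clarkeQuotient f v ∘ ψ) := by
    funext p
    simp only [clarkeQuotient, ψ, Function.comp_apply, smul_smul, mul_comm c p.2]
    field_simp
  obtain ⟨hv_le, hv_ge⟩ := hf.isBoundedUnder_clarkeQuotient_comp v hψ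
  rw [clarkeDeriv_eq_limsup, hscale,
    ← (monotone_mul_left_of_nonneg hc.le).map_limsup_of_continuousAt (clarkeQuotient f v ∘ ψ)
      (continuous_const_mul c).continuousAt hv_le hv_ge.isCoboundedUnder_le]
  gcongr
  exact hf.limsup_clarkeQuotient_comp_le v hψ

lemma clarkeDeriv_smul (hf : LocallyLipschitz f) (x v : E) {c : ℝ} (hc : 0 < c) :
    clarkeDeriv f x (c • v) = c * clarkeDeriv f x v := by
  refine le_antisymm (clarkeDeriv_smul_le hf x v hc) ?_
  have h := clarkeDeriv_smul_le hf x (c • v) (inv_pos.2 hc)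
  rwa [inv_smul_smul₀ hc.ne', le_inv_mul_iff₀ hc] at h

theorem exists_mem_clarkeSubdiff_inner_eq (hf : LocallyLipschitz f) (x v : E) :
    ∃ s ∈ clarkeSubdiff f x, ⟪s, v⟫_ℝ = clarkeDeriv f x v := by
  obtain ⟨g, hg_le, hg_v⟩ := exists_linearMap_le_sublinear_apply_eq (clarkeDeriv f x)
    (fun c hc w => clarkeDeriv_smul hf x w hc) (clarkeDeriv_add_le hf x) v
  set s : E := (InnerProductSpace.toDual ℝ E).symm (LinearMap.toContinuousLinearMap g)
  have hs : ∀ w, ⟪s, w⟫_ℝ = g w := fun w => InnerProductSpace.toDual_symm_apply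
  exact ⟨s, fun w => (hs w).trans_le (hg_le w), (hs v).trans hg_v⟩

lemma clarkeDeriv_le_mul_norm (hf : LocallyLipschitz f) {x : E} {B : ℝ}
    (hB : ∀ s ∈ clarkeSubdiff f x, ‖s‖ ≤ B) (v : E) : clarkeDeriv f x v ≤ B * ‖v‖ := by
  obtain ⟨s, hs, hsv⟩ := exists_mem_clarkeSubdiff_inner_eq hf x v
  calc clarkeDeriv f x v = ⟪s, v⟫_ℝ := hsv.symm
    _ ≤ ‖s‖ * ‖v‖ := real_inner_le_norm s v
    _ ≤ B * ‖v‖ := by gcongr; exact hB s hs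

lemma LocallyLipschitz.eventually_div_lt_of_clarkeDeriv_lt (hf : LocallyLipschitz f) {x v : E}
    {r : ℝ} (h : clarkeDeriv f x v < r) :
    ∀ᶠ t in 𝓝[>] (0 : ℝ), (f (x + t • v) - f x) / t < r :=
  (tendsto_const_nhds.prodMk tendsto_id).eventually <|
    eventually_lt_of_limsup_lt h (isBoundedUnder_le_abs.1
      (hf.isBoundedUnder_abs_clarkeQuotient x v)).1

lemma LocallyLipschitz.sub_le_of_clarkeDeriv_le (hf : LocallyLipschitz f) {x v : E} {C : ℝ}
    (hC : ∀ t ∈ Icc (0 : ℝ) 1, clarkeDeriv f (x + t • v) v ≤ C) : f (x + v) - f x ≤ C := by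
  set g : ℝ → ℝ := fun t => f (x + t • v)
  have hg : Continuous g := hf.continuous.comp (by fun_prop)
  have hslope : ∀ t ∈ Ico (0 : ℝ) 1, ∀ r, C < r → ∃ᶠ z in 𝓝[>] t, slope g t z < r := by
    intro t ht r hr
    have hshift : Tendsto (fun z => z - t) (𝓝[>] t) (𝓝[>] 0) := by
      refine tendsto_nhdsWithin_iff.2 ⟨?_, eventually_nhdsWithin_of_forall fun z hz => ?_⟩
      · simpa using (tendsto_id.sub_const t).mono_left (nhdsWithin_le_nhds (a := t) (s := Ioi t))
      · exact sub_pos.2 (mem_Ioi.1 hz)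
    refine (hshift.eventually (hf.eventually_div_lt_of_clarkeDeriv_lt
      ((hC t (Ico_subset_Icc_self ht)).trans_lt hr))).frequently.mono fun z hz => ?_
    rwa [slope_def_field, show g z = f (x + t • v + (z - t) • v) by simp only [g]; congr 1; module]
  have hB : ∀ t ∈ Ico (0 : ℝ) 1, HasDerivWithinAt (fun t => g 0 + C * t) C (Ici t) t :=
    fun t _ => by simpa using ((hasDerivAt_id t).const_mul C).const_add (g 0) |>.hasDerivWithinAt
  have h := image_le_of_liminf_slope_right_le_deriv_boundary hg.continuousOn (by simp)
    (by fun_prop) hB hslope (right_mem_Icc.2 zero_le_one)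
  simp only [g, zero_smul, add_zero, one_smul, mul_one] at h
  linarith

theorem LocallyLipschitz.abs_sub_le_of_forall_clarkeSubdiff_norm_le (hf : LocallyLipschitz f)
    {x y : E} {B : ℝ} (hB : ∀ z ∈ segment ℝ x y, ∀ s ∈ clarkeSubdiff f z, ‖s‖ ≤ B) :
    |f x - f y| ≤ B * ‖x - y‖ := by
  have one_side : ∀ a b : E, (∀ z ∈ segment ℝ a b, ∀ s ∈ clarkeSubdiff f z, ‖s‖ ≤ B) →
      f b - f a ≤ B * ‖b - a‖ := by
    intro a b hab
    simpa using hf.sub_le_of_clarkeDeriv_le (x := a) (v := b - a) fun t ht =>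
      clarkeDeriv_le_mul_norm hf (hab _ (segment_eq_image' ℝ a b ▸ ⟨t, ht, rfl⟩)) _
  rw [abs_sub_le_iff, norm_sub_rev]
  exact ⟨norm_sub_rev x y ▸ one_side y x (segment_symm ℝ x y ▸ hB), one_side x y hB⟩

end Clarke

theorem spb_growth_estimate_general {d : ℕ} (f : EuclideanSpace ℝ (Fin d) → ℝ)
    (R1 R2 : ℝ) (m : ℕ) (hf : IsSPB f R1 R2 m) (x y : EuclideanSpace ℝ (Fin d)) :
    |f x - f y| ≤ ((2 : ℝ) ^ ((m : ℤ) - 1) * R1 * ‖x‖ ^ m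
      + (2 : ℝ) ^ ((m : ℤ) - 1) * R1 * ‖y - x‖ ^ m + R2) * ‖x - y‖ := by
  obtain ⟨hf_lip, hR1, -, -, hf_bound⟩ := hf
  refine hf_lip.abs_sub_le_of_forall_clarkeSubdiff_norm_le fun z hz s hs => ?_
  calc ‖s‖ ≤ R1 * ‖z‖ ^ m + R2 := hf_bound z s hs
    _ ≤ R1 * (‖x‖ + ‖y - x‖) ^ m + R2 := by
      gcongr
      exact norm_le_norm_add_norm_sub_of_mem_segment hz
    _ ≤ R1 * (2 ^ ((m : ℤ) - 1) * (‖x‖ ^ m + ‖y - x‖ ^ m)) + R2 := by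
      gcongr
      exact add_pow_le_two_zpow_mul (norm_nonneg _) (norm_nonneg _) m
    _ = _ := by ring

/-- Lemma 3.3 of the paper. If `f` is SPB with parameters `R₁, R₂, m`,
then `|f x - f y| ≤ (2^{m-1} R₁ ‖x‖^m + 2^{m-1} R₁ ‖y - x‖^m + R₂) ‖x - y‖`. -/
theorem spb_growth_estimate {d : ℕ} (hd : 1 ≤ d) (f : EuclideanSpace ℝ (Fin d) → ℝ)
    (R1 R2 : ℝ) (m : ℕ) (hf : IsSPB f R1 R2 m) (x y : EuclideanSpace ℝ (Fin d)) :
    |f x - f y| ≤ ((2 : ℝ) ^ ((m : ℤ) - 1) * R1 * ‖x‖ ^ m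
      + (2 : ℝ) ^ ((m : ℤ) - 1) * R1 * ‖y - x‖ ^ m + R2) * ‖x - y‖ :=
  spb_growth_estimate_general f R1 R2 m hf x y
end

section
/- Let d ≥ 1 be an integer, ν > 0 and M ≥ 0. Assume that either ν ≥ (2π)^{d/2}, or M ≥ √d and (M²/d)·e^{1 − M²/d} ≤ ν^{2/d}/(2π). Then the Lebesgue integral of e^{−‖u‖²/2} over the region {u ∈ ℝ^d : ‖u‖ ≥ M} is at most ν. (This is the Lambert-W-free form of the paper's Lemma 3.6: the stated conditions are exactly what the hypothesis M ≥ [−d·W₋₁(−ν^{2/d}/(2πe))]^{1/2} unwinds to.) -/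
open MeasureTheory Filter
open scoped Real

section GaussianTail

variable {V : Type*} [NormedAddCommGroup V] [InnerProductSpace ℝ V] [FiniteDimensional ℝ V]
  [MeasurableSpace V] [BorelSpace V]

theorem lintegral_exp_neg_mul_sq_norm {s : ℝ} (hs : 0 < s) :
    ∫⁻ u : V, ENNReal.ofReal (Real.exp (-s * ‖u‖ ^ 2)) =
      ENNReal.ofReal ((π / s) ^ (Module.finrank ℝ V / 2 : ℝ)) := by
  have hintegral := GaussianFourier.integral_rexp_neg_mul_sq_norm (V := V) hs
  have hintegrable : Integrable fun u : V ↦ Real.exp (-s * ‖u‖ ^ 2) :=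
    Integrable.of_integral_ne_zero (by rw [hintegral]; positivity)
  rw [← hintegral, ofReal_integral_eq_lintegral_ofReal hintegrable
    (Eventually.of_forall fun _ ↦ Real.exp_nonneg _)]

/-- Chernoff bound: on `‖u‖ ≥ M`, trade the factor `e^{-(1/2 - s)‖u‖²}` for its value at `‖u‖ = M`
and integrate the remaining Gaussian `e^{-s‖u‖²}` over the whole space. -/
theorem setLIntegral_exp_neg_sq_norm_div_two_le {M s : ℝ} (hM : 0 ≤ M) (hs : 0 < s)
    (hs_le : s ≤ 1 / 2) :
    ∫⁻ u in {u : V | M ≤ ‖u‖}, ENNReal.ofReal (Real.exp (-‖u‖ ^ 2 / 2)) ≤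
      ENNReal.ofReal
        (Real.exp (-(1 / 2 - s) * M ^ 2) * (π / s) ^ (Module.finrank ℝ V / 2 : ℝ)) := by
  have hpointwise : ∀ u ∈ {u : V | M ≤ ‖u‖}, ENNReal.ofReal (Real.exp (-‖u‖ ^ 2 / 2)) ≤
      ENNReal.ofReal (Real.exp (-(1 / 2 - s) * M ^ 2)) *
        ENNReal.ofReal (Real.exp (-s * ‖u‖ ^ 2)) := by
    intro u hu
    have hMu : M ^ 2 ≤ ‖u‖ ^ 2 := pow_le_pow_left₀ hM hu 2
    rw [← ENNReal.ofReal_mul (Real.exp_nonneg _), ← Real.exp_add]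
    gcongr
    nlinarith
  calc ∫⁻ u in {u : V | M ≤ ‖u‖}, ENNReal.ofReal (Real.exp (-‖u‖ ^ 2 / 2))
      ≤ ∫⁻ u in {u : V | M ≤ ‖u‖}, ENNReal.ofReal (Real.exp (-(1 / 2 - s) * M ^ 2)) *
          ENNReal.ofReal (Real.exp (-s * ‖u‖ ^ 2)) :=
        setLIntegral_mono (by fun_prop) hpointwise
    _ ≤ ∫⁻ u, ENNReal.ofReal (Real.exp (-(1 / 2 - s) * M ^ 2)) *
          ENNReal.ofReal (Real.exp (-s * ‖u‖ ^ 2)) := setLIntegral_le_lintegral _ _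
    _ = _ := by
        rw [lintegral_const_mul' _ _ ENNReal.ofReal_ne_top, lintegral_exp_neg_mul_sq_norm hs,
          ENNReal.ofReal_mul (Real.exp_nonneg _)]

/-- The Chernoff bound at its optimal parameter `s = n / (2M²)`. -/
theorem setLIntegral_exp_neg_sq_norm_div_two_le_of_finrank_le {M : ℝ} (hM : 0 ≤ M)
    (hn : 0 < Module.finrank ℝ V) (hnM : (Module.finrank ℝ V : ℝ) ≤ M ^ 2) :
    ∫⁻ u in {u : V | M ≤ ‖u‖}, ENNReal.ofReal (Real.exp (-‖u‖ ^ 2 / 2)) ≤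
      ENNReal.ofReal ((2 * π * (M ^ 2 / Module.finrank ℝ V *
        Real.exp (1 - M ^ 2 / Module.finrank ℝ V))) ^ (Module.finrank ℝ V / 2 : ℝ)) := by
  set n : ℝ := (Module.finrank ℝ V : ℝ)
  have hn_pos : 0 < n := Nat.cast_pos.2 hn
  have hM2 : 0 < M ^ 2 := hn_pos.trans_le hnM
  have hM0 : M ≠ 0 := by rintro rfl; simp at hM2
  refine (setLIntegral_exp_neg_sq_norm_div_two_le hM (s := n / (2 * M ^ 2)) (by positivity)
    (by rw [div_le_iff₀ (by positivity)]; linarith)).trans_eq ?_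
  congr 1
  have hexp : Real.exp (-(1 / 2 - n / (2 * M ^ 2)) * M ^ 2) =
      Real.exp (1 - M ^ 2 / n) ^ (n / 2) := by
    rw [← Real.exp_mul]
    congr 1
    field_simp
    ring
  rw [hexp, ← Real.mul_rpow (Real.exp_nonneg _) (by positivity)]
  congr 1
  field_simp

end GaussianTail

theorem gaussian_tail_bound_general {d : ℕ} (hd : 1 ≤ d) (ν M : ℝ) (hν : 0 < ν)
    (h : (2 * π) ^ ((d : ℝ) / 2) ≤ ν ∨
      (Real.sqrt d ≤ M ∧ M ^ 2 / d * Real.exp (1 - M ^ 2 / d) ≤ ν ^ ((2 : ℝ) / d) / (2 * π))) :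
    (∫⁻ u in {u : EuclideanSpace ℝ (Fin d) | M ≤ ‖u‖},
      ENNReal.ofReal (Real.exp (-‖u‖ ^ 2 / 2))) ≤ ENNReal.ofReal ν := by
  rcases h with hν_large | ⟨hdM, hM⟩
  · calc _ ≤ ∫⁻ u : EuclideanSpace ℝ (Fin d), ENNReal.ofReal (Real.exp (-(1 / 2) * ‖u‖ ^ 2)) := by
          simp_rw [neg_div, neg_mul, one_div, inv_mul_eq_div]
          exact setLIntegral_le_lintegral _ _
      _ ≤ ENNReal.ofReal ν := by
          rw [lintegral_exp_neg_mul_sq_norm (by norm_num), finrank_euclideanSpace_fin,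
            show π / (1 / 2) = 2 * π by ring]
          exact ENNReal.ofReal_le_ofReal hν_large
  · have hd0 : (0 : ℝ) < d := by exact_mod_cast hd
    have hdM2 : (d : ℝ) ≤ M ^ 2 := by
      simpa [Real.sq_sqrt hd0.le] using pow_le_pow_left₀ (Real.sqrt_nonneg _) hdM 2
    have htail := setLIntegral_exp_neg_sq_norm_div_two_le_of_finrank_le
      (V := EuclideanSpace ℝ (Fin d)) ((Real.sqrt_nonneg _).trans hdM)
      (by rw [finrank_euclideanSpace_fin]; omega) (by rwa [finrank_euclideanSpace_fin])
    rw [finrank_euclideanSpace_fin] at htail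
    refine htail.trans (ENNReal.ofReal_le_ofReal ?_)
    calc (2 * π * (M ^ 2 / d * Real.exp (1 - M ^ 2 / d))) ^ ((d : ℝ) / 2)
        ≤ (ν ^ ((2 : ℝ) / d)) ^ ((d : ℝ) / 2) := by
          gcongr
          rwa [← le_div_iff₀' (by positivity)]
      _ = ν := by
          rw [← Real.rpow_mul hν.le, div_mul_div_cancel₀' two_ne_zero, div_self hd0.ne',
            Real.rpow_one]

/-- Lemma 3.6, Lambert-W-free form. Gaussian tail bound:
if either `ν ≥ (2π)^{d/2}`, or `M ≥ √d` and `(M²/d) e^{1 - M²/d} ≤ ν^{2/d}/(2π)`, then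
`∫_{‖u‖ ≥ M} e^{-‖u‖²/2} du ≤ ν`. -/
theorem gaussian_tail_bound {d : ℕ} (hd : 1 ≤ d) (ν M : ℝ) (hν : 0 < ν) (hM : 0 ≤ M)
    (h : (2 * π) ^ ((d : ℝ) / 2) ≤ ν ∨
      (Real.sqrt d ≤ M ∧ M ^ 2 / d * Real.exp (1 - M ^ 2 / d) ≤ ν ^ ((2 : ℝ) / d) / (2 * π))) :
    (∫⁻ u in {u : EuclideanSpace ℝ (Fin d) | M ≤ ‖u‖},
      ENNReal.ofReal (Real.exp (-‖u‖ ^ 2 / 2))) ≤ ENNReal.ofReal ν :=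
  gaussian_tail_bound_general hd ν M hν h
end

section
/- Let (X, 𝒜, P) be a probability space, ξ : X → ℝ^d a measurable map, g : ℝ^d → [0,∞) a lower semicontinuous function, n ≥ 1 an integer, and α_c, β_c > 0. Assume ∫ ‖ξ‖² dP ≤ β_c and ∫ g(ξ)/(1 + ‖ξ‖^n) dP ≤ α_c. Then ∫ g(ξ)^{1/(2⌈n/2⌉)} dP ≤ (1 + √β_c) (2α_c)^{1/(2⌈n/2⌉)}, where all integrals are Lebesgue integrals of nonnegative functions (valued in [0,∞]) and ⌈·⌉ denotes the ceiling. -/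
/-!
Write `g = (g / (1 + ‖ξ‖ⁿ)) · (1 + ‖ξ‖ⁿ)` and put `k = 2⌈n/2⌉ ≥ n`. Since
`1 + tⁿ ≤ 2 (1 + t)ᵏ`, taking `k`-th roots gives
`g^{1/k} ≤ 2^{1/k} (g / (1 + ‖ξ‖ⁿ))^{1/k} (1 + ‖ξ‖)`. Jensen for the concave power `1/k`
bounds the expectation of the first factor by `α_c^{1/k}`, and since `1/k ≤ 1/2`,
Cauchy–Schwarz followed by Jensen for the power `2/k` bounds the cross term by
`α_c^{1/k} √β_c`.
-/

open MeasureTheory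
open scoped ENNReal

lemma one_add_pow_rpow_le {n k : ℕ} (hnk : n ≤ k) (hk : 0 < k) {t : ℝ} (ht : 0 ≤ t) :
    (1 + t ^ n) ^ (1 / (k : ℝ)) ≤ 2 ^ (1 / (k : ℝ)) * (1 + t) := by
  have hk' : (k : ℝ) ≠ 0 := by positivity
  have hbound : 1 + t ^ n ≤ 2 * (1 + t) ^ k := by
    have hone : 1 ≤ (1 + t) ^ k := one_le_pow₀ (by linarith)
    have htn : t ^ n ≤ (1 + t) ^ k :=
      (pow_le_pow_left₀ ht (by linarith) n).trans (pow_le_pow_right₀ (by linarith) hnk)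
    linarith
  calc (1 + t ^ n) ^ (1 / (k : ℝ))
      ≤ (2 * (1 + t) ^ k) ^ (1 / (k : ℝ)) := by gcongr
    _ = 2 ^ (1 / (k : ℝ)) * (1 + t) := by
      rw [Real.mul_rpow (by norm_num) (by positivity), ← Real.rpow_natCast,
        ← Real.rpow_mul (by linarith), mul_one_div_cancel hk', Real.rpow_one]

lemma ofReal_rpow_le_two_rpow_mul_div_one_add_pow {n k : ℕ} (hnk : n ≤ k) (hk : 0 < k)
    {a t : ℝ} (ha : 0 ≤ a) (ht : 0 ≤ t) :
    ENNReal.ofReal (a ^ (1 / (k : ℝ))) ≤ ENNReal.ofReal (2 ^ (1 / (k : ℝ))) *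
      (ENNReal.ofReal (a / (1 + t ^ n)) ^ (1 / (k : ℝ)) * (1 + ENNReal.ofReal t)) := by
  have hden : 0 < 1 + t ^ n := by positivity
  have hquot : 0 ≤ a / (1 + t ^ n) := by positivity
  have hreal : a ^ (1 / (k : ℝ))
      ≤ 2 ^ (1 / (k : ℝ)) * ((a / (1 + t ^ n)) ^ (1 / (k : ℝ)) * (1 + t)) :=
    calc a ^ (1 / (k : ℝ))
        = (a / (1 + t ^ n)) ^ (1 / (k : ℝ)) * (1 + t ^ n) ^ (1 / (k : ℝ)) := by
          rw [← Real.mul_rpow hquot hden.le, div_mul_cancel₀ _ hden.ne']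
      _ ≤ (a / (1 + t ^ n)) ^ (1 / (k : ℝ)) * (2 ^ (1 / (k : ℝ)) * (1 + t)) := by
          gcongr; exact one_add_pow_rpow_le hnk hk ht
      _ = _ := by ring
  refine (ENNReal.ofReal_le_ofReal hreal).trans_eq ?_
  rw [ENNReal.ofReal_mul (by positivity), ENNReal.ofReal_mul (by positivity),
    ← ENNReal.ofReal_rpow_of_nonneg hquot (by positivity), ENNReal.ofReal_add zero_le_one ht,
    ENNReal.ofReal_one]

namespace MeasureTheory

variable {α : Type*} [MeasurableSpace α] {μ : Measure α} [IsProbabilityMeasure μ]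
  {f g : α → ℝ≥0∞}

lemma lintegral_rpow_le_rpow_lintegral (hf : AEMeasurable f μ) {r : ℝ} (hr0 : 0 ≤ r)
    (hr1 : r ≤ 1) : ∫⁻ a, f a ^ r ∂μ ≤ (∫⁻ a, f a ∂μ) ^ r := by
  simpa using ENNReal.lintegral_mul_norm_pow_le hf aemeasurable_const hr0 (sub_nonneg.2 hr1)
    (add_sub_cancel r 1) (μ := μ) (g := fun _ => 1)

lemma lintegral_rpow_mul_le (hf : AEMeasurable f μ) (hg : AEMeasurable g μ) {p : ℝ}
    (hp0 : 0 ≤ p) (hp : p ≤ 1 / 2) :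
    ∫⁻ a, f a ^ p * g a ∂μ ≤ (∫⁻ a, f a ∂μ) ^ p * (∫⁻ a, g a ^ 2 ∂μ) ^ (1 / 2 : ℝ) := by
  have hsq : ∀ x : ℝ≥0∞, (x ^ 2) ^ (1 / 2 : ℝ) = x := fun x => by
    rw [← ENNReal.rpow_natCast, ← ENNReal.rpow_mul]; norm_num
  calc ∫⁻ a, f a ^ p * g a ∂μ
      = ∫⁻ a, (f a ^ (2 * p)) ^ (1 / 2 : ℝ) * (g a ^ 2) ^ (1 / 2 : ℝ) ∂μ := by
        refine lintegral_congr fun a => ?_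
        rw [hsq, ← ENNReal.rpow_mul]; ring_nf
    _ ≤ (∫⁻ a, f a ^ (2 * p) ∂μ) ^ (1 / 2 : ℝ) * (∫⁻ a, g a ^ 2 ∂μ) ^ (1 / 2 : ℝ) :=
        ENNReal.lintegral_mul_norm_pow_le (hf.pow_const (2 * p)) (hg.pow_const (2 : ℕ))
          (p := 1 / 2) (q := 1 / 2) (by norm_num) (by norm_num) (by norm_num)
    _ ≤ ((∫⁻ a, f a ∂μ) ^ (2 * p)) ^ (1 / 2 : ℝ) * (∫⁻ a, g a ^ 2 ∂μ) ^ (1 / 2 : ℝ) := by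
        gcongr
        exact lintegral_rpow_le_rpow_lintegral hf (by positivity) (by linarith)
    _ = (∫⁻ a, f a ∂μ) ^ p * (∫⁻ a, g a ^ 2 ∂μ) ^ (1 / 2 : ℝ) := by
        rw [← ENNReal.rpow_mul]; ring_nf

lemma lintegral_rpow_mul_one_add_le (hf : AEMeasurable f μ) (hg : AEMeasurable g μ) {p : ℝ}
    (hp0 : 0 ≤ p) (hp : p ≤ 1 / 2) :
    ∫⁻ a, f a ^ p * (1 + g a) ∂μ
      ≤ (∫⁻ a, f a ∂μ) ^ p * (1 + (∫⁻ a, g a ^ 2 ∂μ) ^ (1 / 2 : ℝ)) := by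
  calc ∫⁻ a, f a ^ p * (1 + g a) ∂μ = ∫⁻ a, f a ^ p ∂μ + ∫⁻ a, f a ^ p * g a ∂μ := by
        simp_rw [mul_add, mul_one]
        exact lintegral_add_left' (hf.pow_const p) _
    _ ≤ (∫⁻ a, f a ∂μ) ^ p + (∫⁻ a, f a ∂μ) ^ p * (∫⁻ a, g a ^ 2 ∂μ) ^ (1 / 2 : ℝ) := by
        gcongr
        · exact lintegral_rpow_le_rpow_lintegral hf hp0 (by linarith)
        · exact lintegral_rpow_mul_le hf hg hp0 hp
    _ = _ := by ring

end MeasureTheory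

theorem moment_transfer_lemma_general {X : Type*} [MeasurableSpace X] (P : Measure X)
    [IsProbabilityMeasure P] {d : ℕ} (ξ : X → EuclideanSpace ℝ (Fin d))
    (hξ : Measurable ξ) (g : EuclideanSpace ℝ (Fin d) → ℝ) (hg0 : ∀ y, 0 ≤ g y)
    (hg : LowerSemicontinuous g) (n : ℕ) (hn : 1 ≤ n) (αc βc : ℝ) (hαc : 0 < αc)
    (hβc : 0 < βc)
    (h1 : (∫⁻ ω, ENNReal.ofReal (‖ξ ω‖ ^ 2) ∂P) ≤ ENNReal.ofReal βc)
    (h2 : (∫⁻ ω, ENNReal.ofReal (g (ξ ω) / (1 + ‖ξ ω‖ ^ n)) ∂P) ≤ ENNReal.ofReal αc) :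
    (∫⁻ ω, ENNReal.ofReal (g (ξ ω) ^ ((1 : ℝ) / (2 * (⌈(n : ℝ) / 2⌉₊ : ℝ)))) ∂P)
      ≤ ENNReal.ofReal ((1 + Real.sqrt βc)
          * (2 * αc) ^ ((1 : ℝ) / (2 * (⌈(n : ℝ) / 2⌉₊ : ℝ)))) := by
  set m : ℕ := ⌈(n : ℝ) / 2⌉₊
  set p : ℝ := 1 / (2 * (m : ℝ))
  have hnm : n ≤ 2 * m := by
    have : (n : ℝ) ≤ 2 * m := by linarith [Nat.le_ceil ((n : ℝ) / 2)]
    exact_mod_cast this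
  have hp : p = 1 / ((2 * m : ℕ) : ℝ) := by push_cast; rfl
  have hp0 : 0 ≤ p := by positivity
  have hp_half : p ≤ 1 / 2 := by
    have : (1 : ℝ) ≤ m := by exact_mod_cast (show 1 ≤ m by omega)
    exact one_div_le_one_div_of_le two_pos (by linarith)
  set H : X → ℝ≥0∞ := fun ω => ENNReal.ofReal (g (ξ ω) / (1 + ‖ξ ω‖ ^ n))
  have hH : Measurable H :=
    ((hg.measurable.comp hξ).div ((hξ.norm.pow_const n).const_add 1)).ennreal_ofReal
  have hpointwise (ω : X) :
      ENNReal.ofReal (g (ξ ω) ^ p) ≤ ENNReal.ofReal (2 ^ p) * (H ω ^ p * (1 + ‖ξ ω‖ₑ)) := by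
    simpa only [hp, ofReal_norm] using ofReal_rpow_le_two_rpow_mul_div_one_add_pow hnm
      (by omega) (hg0 (ξ ω)) (norm_nonneg (ξ ω))
  have hmoment : ∫⁻ ω, ‖ξ ω‖ₑ ^ 2 ∂P ≤ ENNReal.ofReal βc := by
    simpa only [ENNReal.ofReal_pow (norm_nonneg _), ofReal_norm] using h1
  calc ∫⁻ ω, ENNReal.ofReal (g (ξ ω) ^ p) ∂P
      ≤ ∫⁻ ω, ENNReal.ofReal (2 ^ p) * (H ω ^ p * (1 + ‖ξ ω‖ₑ)) ∂P := lintegral_mono hpointwise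
    _ = ENNReal.ofReal (2 ^ p) * ∫⁻ ω, H ω ^ p * (1 + ‖ξ ω‖ₑ) ∂P :=
        lintegral_const_mul' _ _ ENNReal.ofReal_ne_top
    _ ≤ ENNReal.ofReal (2 ^ p) *
          (ENNReal.ofReal αc ^ p * (1 + ENNReal.ofReal βc ^ (1 / 2 : ℝ))) := by
        grw [lintegral_rpow_mul_one_add_le hH.aemeasurable hξ.enorm.aemeasurable hp0 hp_half,
          h2, hmoment]
    _ = ENNReal.ofReal ((1 + Real.sqrt βc) * (2 * αc) ^ p) := by
        rw [ENNReal.ofReal_rpow_of_nonneg hαc.le hp0,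
          ENNReal.ofReal_rpow_of_nonneg hβc.le (by norm_num), ← Real.sqrt_eq_rpow,
          ← ENNReal.ofReal_one, ← ENNReal.ofReal_add zero_le_one (Real.sqrt_nonneg _),
          ← ENNReal.ofReal_mul (Real.rpow_nonneg hαc.le p), ← ENNReal.ofReal_mul (by positivity),
          Real.mul_rpow zero_le_two hαc.le]
        ring_nf

/-- Lemma 4.4. If `E[‖ξ‖²] ≤ β_c` and `E[g(ξ)/(1 + ‖ξ‖^n)] ≤ α_c`, then
`E[g(ξ)^{1/(2⌈n/2⌉)}] ≤ (1 + √β_c) (2α_c)^{1/(2⌈n/2⌉)}`. -/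
theorem moment_transfer_lemma {X : Type*} [MeasurableSpace X] (P : Measure X)
    [IsProbabilityMeasure P] {d : ℕ} (hd : 1 ≤ d) (ξ : X → EuclideanSpace ℝ (Fin d))
    (hξ : Measurable ξ) (g : EuclideanSpace ℝ (Fin d) → ℝ) (hg0 : ∀ y, 0 ≤ g y)
    (hg : LowerSemicontinuous g) (n : ℕ) (hn : 1 ≤ n) (αc βc : ℝ) (hαc : 0 < αc)
    (hβc : 0 < βc)
    (h1 : (∫⁻ ω, ENNReal.ofReal (‖ξ ω‖ ^ 2) ∂P) ≤ ENNReal.ofReal βc)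
    (h2 : (∫⁻ ω, ENNReal.ofReal (g (ξ ω) / (1 + ‖ξ ω‖ ^ n)) ∂P) ≤ ENNReal.ofReal αc) :
    (∫⁻ ω, ENNReal.ofReal (g (ξ ω) ^ ((1 : ℝ) / (2 * (⌈(n : ℝ) / 2⌉₊ : ℝ)))) ∂P)
      ≤ ENNReal.ofReal ((1 + Real.sqrt βc)
          * (2 * αc) ^ ((1 : ℝ) / (2 * (⌈(n : ℝ) / 2⌉₊ : ℝ)))) :=
  moment_transfer_lemma_general P ξ hξ g hg0 hg n hn αc βc hαc hβc h1 h2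
end
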